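/- arXiv:1204.0546 — 10 statements merged into one kernel-verified Lean document; each statement's English description precedes it below -/
import Mathlib

section
/- The number of binary necklaces of length n (binary strings of length n up to cyclic rotation) equals (1/n) * sum over divisors d of n of φ(n/d) * 2^d, where φ is Euler's totient function. -/
/-!
Burnside's lemma for the rotation action of `ZMod n` on strings `ZMod n → α`, the action being
the domain action of `(ZMod n)ᵈᵃᵃ`. A string fixed by the rotation by `k` is `k`-periodic, i.e. a
function on `ZMod n ⧸ ⟨k⟩`, a group of order `gcd(n, k)`; so there are `|α| ^ gcd(n, k)` of them.
Exactly `φ(n / d)` residues `k` have `gcd(n, k) = d`.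
-/

/-- The setoid on length-`n` strings (functions `ZMod n → α`) identifying
strings that differ by a cyclic rotation. -/
def rotSetoid (n : ℕ) (α : Type*) : Setoid (ZMod n → α) where
  r f g := ∃ k : ZMod n, ∀ i, g i = f (i + k)
  iseqv := ⟨fun f => ⟨0, fun i => by rw [add_zero]⟩,
    fun {f g} ⟨k, h⟩ => ⟨-k, fun i => by rw [h (i + -k), neg_add_cancel_right]⟩,
    fun {f g h} ⟨k, hk⟩ ⟨k', hk'⟩ => ⟨k' + k, fun i => by
      rw [hk' i, hk (i + k'), add_assoc]⟩⟩

open AddAction Finset Function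
open scoped Nat

theorem AddAction.sum_natCard_fixedBy_eq_natCard_orbits_mul_natCard (G X : Type*) [AddGroup G]
    [Fintype G] [AddAction G X] [Finite X] :
    ∑ g : G, Nat.card (fixedBy X g) = Nat.card (orbitRel.Quotient G X) * Nat.card G := by
  rw [← Nat.card_sigma, Nat.card_congr (sigmaFixedByEquivOrbitsProdAddGroup G X), Nat.card_prod]

theorem Function.periodic_iff_leftRel_zmultiples_le_ker {G α : Type*} [AddGroup G]
    {f : G → α} {g : G} :
    Periodic f g ↔ QuotientAddGroup.leftRel (AddSubgroup.zmultiples g) ≤ Setoid.ker f := by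
  constructor
  · intro hf a b hab
    obtain ⟨m, hm⟩ := AddSubgroup.mem_zmultiples_iff.mp (QuotientAddGroup.leftRel_apply.mp hab)
    rw [Setoid.ker_def, ← add_neg_cancel_left a b, ← hm, hf.zsmul]
  · intro hf a
    refine (hf ?_).symm
    rw [QuotientAddGroup.leftRel_apply, neg_add_cancel_left]
    exact AddSubgroup.mem_zmultiples g

namespace DomAddAct

instance {M : Type*} [Fintype M] : Fintype Mᵈᵃᵃ := Fintype.ofEquiv M mk

variable {G α : Type*}

theorem mk_mem_fixedBy_iff_periodic [AddCommMonoid G] {g : G} {f : G → α} :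
    f ∈ fixedBy (G → α) (mk g) ↔ Periodic f g := by
  simp only [mem_fixedBy, funext_iff, vadd_apply, Equiv.symm_apply_apply, vadd_eq_add,
    add_comm g]
  rfl

def fixedByMkEquiv [AddCommGroup G] (g : G) :
    fixedBy (G → α) (mk g) ≃ (G ⧸ AddSubgroup.zmultiples g → α) :=
  (Equiv.subtypeEquivRight fun _ =>
    mk_mem_fixedBy_iff_periodic.trans periodic_iff_leftRel_zmultiples_le_ker).trans
    (Setoid.liftEquiv _)

theorem natCard_fixedBy_mk [AddCommGroup G] [Finite G] (g : G) :
    Nat.card (fixedBy (G → α) (mk g)) = Nat.card α ^ (AddSubgroup.zmultiples g).index := by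
  rw [Nat.card_congr (fixedByMkEquiv g), Nat.card_fun, AddSubgroup.index]

end DomAddAct

theorem ZMod.index_zmultiples {n : ℕ} [NeZero n] (k : ZMod n) :
    (AddSubgroup.zmultiples k).index = n.gcd k.val := by
  have hpos : 0 < n / n.gcd k.val :=
    Nat.div_pos (Nat.gcd_le_left _ n.pos_of_neZero) (Nat.gcd_pos_of_pos_left _ n.pos_of_neZero)
  have hord : addOrderOf k = n / n.gcd k.val := by
    rw [← ZMod.natCast_zmod_val k, ZMod.addOrderOf_coe _ (NeZero.ne n),
      ZMod.val_natCast_of_lt k.val_lt]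
  refine Nat.eq_of_mul_eq_mul_right hpos ?_
  rw [Nat.mul_div_cancel' (Nat.gcd_dvd_left _ _), ← hord, ← Nat.card_zmultiples,
    AddSubgroup.index_mul_card, Nat.card_zmod]

theorem ZMod.sum_comp_val {n : ℕ} [NeZero n] {M : Type*} [AddCommMonoid M] (f : ℕ → M) :
    ∑ k : ZMod n, f k.val = ∑ i ∈ range n, f i := by
  obtain ⟨m, rfl⟩ := Nat.exists_eq_succ_of_ne_zero (NeZero.ne n)
  exact Fin.sum_univ_eq_sum_range f (m + 1)

theorem Nat.sum_range_comp_gcd {M : Type*} [AddCommMonoid M] (n : ℕ) (f : ℕ → M) :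
    ∑ i ∈ range n, f (n.gcd i) = ∑ d ∈ n.divisors, φ (n / d) • f d := by
  rcases eq_or_ne n 0 with rfl | hn
  · simp
  rw [← sum_fiberwise_of_maps_to (g := n.gcd) (t := n.divisors)
    fun i _ => Nat.mem_divisors.mpr ⟨Nat.gcd_dvd_left n i, hn⟩]
  refine sum_congr rfl fun d hd => ?_
  rw [sum_congr rfl fun i hi => congrArg f (mem_filter.mp hi).2, sum_const,
    Nat.totient_div_of_dvd (Nat.dvd_of_mem_divisors hd)]

theorem rotSetoid_eq_orbitRel (n : ℕ) (α : Type*) :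
    rotSetoid n α = orbitRel (ZMod n)ᵈᵃᵃ (ZMod n → α) := by
  ext f g
  rw [orbitRel_apply, mem_orbit_iff]
  constructor
  · rintro ⟨k, hk⟩
    exact ⟨DomAddAct.mk (-k), funext fun i => by simp [DomAddAct.vadd_apply, hk, add_comm]⟩
  · rintro ⟨c, rfl⟩
    exact ⟨-DomAddAct.mk.symm c, fun i => by simp [DomAddAct.vadd_apply]⟩

theorem natCard_quotient_rotSetoid_mul (n : ℕ) [NeZero n] (α : Type*) [Finite α] :
    Nat.card (Quotient (rotSetoid n α)) * n = ∑ d ∈ n.divisors, φ (n / d) * Nat.card α ^ d := by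
  calc Nat.card (Quotient (rotSetoid n α)) * n
      = Nat.card (orbitRel.Quotient (ZMod n)ᵈᵃᵃ (ZMod n → α)) * Nat.card (ZMod n)ᵈᵃᵃ := by
        rw [rotSetoid_eq_orbitRel, Nat.card_congr DomAddAct.mk.symm, Nat.card_zmod]
    _ = ∑ c : (ZMod n)ᵈᵃᵃ, Nat.card (fixedBy (ZMod n → α) c) :=
        (sum_natCard_fixedBy_eq_natCard_orbits_mul_natCard _ _).symm
    _ = ∑ k : ZMod n, Nat.card α ^ n.gcd k.val := by
        simp only [← DomAddAct.mk.sum_comp, DomAddAct.natCard_fixedBy_mk, ZMod.index_zmultiples]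
    _ = ∑ d ∈ n.divisors, φ (n / d) * Nat.card α ^ d := by
        simp only [ZMod.sum_comp_val (fun i => Nat.card α ^ n.gcd i), Nat.sum_range_comp_gcd,
          smul_eq_mul]

/-- The number of binary necklaces of length `n` equals
`(1/n) ∑_{d ∣ n} φ(n/d) 2^d`. -/
theorem binary_necklace_count (n : ℕ) [NeZero n] :
    (Nat.card (Quotient (rotSetoid n (Fin 2))) : ℚ) =
      (1 / (n : ℚ)) * ∑ d ∈ n.divisors, (Nat.totient (n / d) : ℚ) * 2 ^ d := by
  have key := natCard_quotient_rotSetoid_mul n (Fin 2)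
  rw [Nat.card_fin] at key
  rw [one_div, inv_mul_eq_div, eq_div_iff (Nat.cast_ne_zero.mpr (NeZero.ne n))]
  exact_mod_cast key
end

section
/- For the map f(x) = R - x², if x₁, x₂, x₃ form a 3-cycle (f(x₁) = x₂, f(x₂) = x₃, f(x₃) = x₁, all distinct) with multiplier λ = (-2)³x₁x₂x₃, then 64R³ - 128R² - 8(λ - 8)R - (λ - 8)² = 0. -/
/-!
Write `s = x₁ + x₂ + x₃`. Summing the cycle equations, and multiplying the relations
`(xᵢ + xⱼ)(xᵢ - xⱼ) = xₖ - xⱼ` (where distinctness is used), expresses the other elementary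
symmetric functions of the cycle through `s` and `R` and forces `(2s + 3)(s² - s + 2 - R) = 0`.
On the branch `s = -3/2`, comparing `Σ xᵢ²` with `Σ (R - xᵢ²)²` leaves `R = 23/4`, which lies on the
other branch, or `R = -1/4`, where all three points collapse to the fixed point `-1/2`.
Hence `R = s² - s + 2`, the multiplier satisfies `λ - 8 = 8(s - 1)R`, and the claimed polynomial
equals `64R²(R - (s² - s + 2))`.
-/

structure IsThreeCycle {K : Type*} [CommRing K] (R x₁ x₂ x₃ : K) : Prop where
  map_x₁ : R - x₁ ^ 2 = x₂
  map_x₂ : R - x₂ ^ 2 = x₃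
  map_x₃ : R - x₃ ^ 2 = x₁

namespace IsThreeCycle

section CommRing

variable {K : Type*} [CommRing K] {R x₁ x₂ x₃ : K}

theorem sq_add_sq_add_sq (hc : IsThreeCycle R x₁ x₂ x₃) :
    x₁ ^ 2 + x₂ ^ 2 + x₃ ^ 2 = 3 * R - (x₁ + x₂ + x₃) := by
  linear_combination -hc.map_x₁ - hc.map_x₂ - hc.map_x₃

theorem map_sq_add_map_sq_add_map_sq (hc : IsThreeCycle R x₁ x₂ x₃) :
    (R - x₁ ^ 2) ^ 2 + (R - x₂ ^ 2) ^ 2 + (R - x₃ ^ 2) ^ 2 = x₁ ^ 2 + x₂ ^ 2 + x₃ ^ 2 := by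
  rw [hc.map_x₁, hc.map_x₂, hc.map_x₃]; ring

theorem mul_add_mul_add_mul (hc : IsThreeCycle R x₁ x₂ x₃)
    (hprod : (x₁ + x₂) * (x₂ + x₃) * (x₃ + x₁) = -1) :
    x₁ * x₂ + x₂ * x₃ + x₃ * x₁ = R * (x₁ + x₂ + x₃) - (x₁ + x₂ + x₃) ^ 3 - 3 := by
  linear_combination -x₁ * hc.map_x₁ - x₂ * hc.map_x₂ - x₃ * hc.map_x₃ + 3 * hprod

end CommRing

section IsDomain

variable {K : Type*} [CommRing K] [IsDomain K] {R x₁ x₂ x₃ : K}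

theorem add_mul_add_mul_add (hc : IsThreeCycle R x₁ x₂ x₃)
    (h12 : x₁ ≠ x₂) (h23 : x₂ ≠ x₃) (h13 : x₁ ≠ x₃) :
    (x₁ + x₂) * (x₂ + x₃) * (x₃ + x₁) = -1 := by
  have hD : (x₁ - x₂) * (x₂ - x₃) * (x₃ - x₁) ≠ 0 := by
    simp [sub_eq_zero, h12, h23, h13.symm]
  have e₁ : (x₁ + x₂) * (x₁ - x₂) = x₃ - x₂ := by linear_combination hc.map_x₂ - hc.map_x₁
  have e₂ : (x₂ + x₃) * (x₂ - x₃) = x₁ - x₃ := by linear_combination hc.map_x₃ - hc.map_x₂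
  have e₃ : (x₃ + x₁) * (x₃ - x₁) = x₂ - x₁ := by linear_combination hc.map_x₁ - hc.map_x₃
  refine mul_right_cancel₀ hD ?_
  calc (x₁ + x₂) * (x₂ + x₃) * (x₃ + x₁) * ((x₁ - x₂) * (x₂ - x₃) * (x₃ - x₁))
      = ((x₁ + x₂) * (x₁ - x₂)) * ((x₂ + x₃) * (x₂ - x₃)) * ((x₃ + x₁) * (x₃ - x₁)) := by ring
    _ = -1 * ((x₁ - x₂) * (x₂ - x₃) * (x₃ - x₁)) := by rw [e₁, e₂, e₃]; ring

theorem two_mul_sum_add_three_mul (hc : IsThreeCycle R x₁ x₂ x₃)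
    (h12 : x₁ ≠ x₂) (h23 : x₂ ≠ x₃) (h13 : x₁ ≠ x₃) :
    (2 * (x₁ + x₂ + x₃) + 3) * ((x₁ + x₂ + x₃) ^ 2 - (x₁ + x₂ + x₃) + 2 - R) = 0 := by
  linear_combination hc.sq_add_sq_add_sq
    + 2 * hc.mul_add_mul_add_mul (hc.add_mul_add_mul_add h12 h23 h13)

end IsDomain

section Field

variable {K : Type*} [Field K] [CharZero K] {R x₁ x₂ x₃ : K}

theorem parameter_eq_of_sum_eq (hc : IsThreeCycle R x₁ x₂ x₃)
    (h12 : x₁ ≠ x₂) (h23 : x₂ ≠ x₃) (h13 : x₁ ≠ x₃) (hs : x₁ + x₂ + x₃ = -3 / 2) :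
    R = 23 / 4 := by
  have hprod := hc.add_mul_add_mul_add h12 h23 h13
  have hq : x₁ * x₂ + x₂ * x₃ + x₃ * x₁ = 3 / 8 - 3 / 2 * R := by
    linear_combination (-1 / 2) * hc.sq_add_sq_add_sq + ((x₁ + x₂ + x₃) - 1 / 2) / 2 * hs
  have hp : x₁ * x₂ * x₃ = 7 / 16 + 9 / 4 * R := by
    linear_combination -hprod + (x₁ * x₂ + x₂ * x₃ + x₃ * x₁) * hs - 3 / 2 * hq
  -- Newton's identities for `Σ xᵢ²` and `Σ xᵢ⁴`
  have hsym : (R - x₁ ^ 2) ^ 2 + (R - x₂ ^ 2) ^ 2 + (R - x₃ ^ 2) ^ 2 - (x₁ ^ 2 + x₂ ^ 2 + x₃ ^ 2)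
      = 3 * R ^ 2 - 2 * R * ((x₁ + x₂ + x₃) ^ 2 - 2 * (x₁ * x₂ + x₂ * x₃ + x₃ * x₁))
        + ((x₁ + x₂ + x₃) ^ 2 - 2 * (x₁ * x₂ + x₂ * x₃ + x₃ * x₁)) ^ 2
        - 2 * ((x₁ * x₂ + x₂ * x₃ + x₃ * x₁) ^ 2 - 2 * (x₁ + x₂ + x₃) * (x₁ * x₂ * x₃))
        - ((x₁ + x₂ + x₃) ^ 2 - 2 * (x₁ * x₂ + x₂ * x₃ + x₃ * x₁)) := by
    ring
  rw [hs, hq, hp] at hsym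
  have hsq : (4 * R + 1) * (4 * R - 23) = 0 := by
    linear_combination (32 / 3) * (hc.map_sq_add_map_sq_add_map_sq - hsym)
  rcases mul_eq_zero.mp hsq with hR | hR
  · have hcube : ∀ x, (x - x₁) * (x - x₂) * (x - x₃) = (x + 1 / 2) ^ 3 := fun x => by
      linear_combination (-x ^ 2) * hs + x * hq - hp + (-(3 / 8) * x - 9 / 16) * hR
    have e₁ : x₁ + 1 / 2 = 0 := pow_eq_zero_iff three_ne_zero |>.mp <| by rw [← hcube]; ring
    have e₂ : x₂ + 1 / 2 = 0 := pow_eq_zero_iff three_ne_zero |>.mp <| by rw [← hcube]; ring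
    exact absurd (by linear_combination e₁ - e₂) h12
  · linear_combination hR / 4

theorem parameter_eq (hc : IsThreeCycle R x₁ x₂ x₃)
    (h12 : x₁ ≠ x₂) (h23 : x₂ ≠ x₃) (h13 : x₁ ≠ x₃) :
    R = (x₁ + x₂ + x₃) ^ 2 - (x₁ + x₂ + x₃) + 2 := by
  rcases mul_eq_zero.mp (hc.two_mul_sum_add_three_mul h12 h23 h13) with hs | hR
  · have hs' : x₁ + x₂ + x₃ = -3 / 2 := by linear_combination hs / 2
    rw [hc.parameter_eq_of_sum_eq h12 h23 h13 hs', hs']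
    norm_num
  · linear_combination -hR

theorem multiplier_sub_eight (hc : IsThreeCycle R x₁ x₂ x₃)
    (h12 : x₁ ≠ x₂) (h23 : x₂ ≠ x₃) (h13 : x₁ ≠ x₃) :
    (-2) ^ 3 * (x₁ * x₂ * x₃) - 8 = 8 * (x₁ + x₂ + x₃ - 1) * R := by
  have hprod := hc.add_mul_add_mul_add h12 h23 h13
  linear_combination 8 * hprod - 8 * (x₁ + x₂ + x₃) * hc.mul_add_mul_add_mul hprod
    + (-8 * (x₁ + x₂ + x₃) ^ 2 - 8 * (x₁ + x₂ + x₃) + 8) * hc.parameter_eq h12 h23 h13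

end Field

end IsThreeCycle

/-- For `f(x) = R - x²`, a 3-cycle with multiplier `l = (-2)³ x₁x₂x₃`
satisfies `64R³ - 128R² - 8(l - 8)R - (l - 8)² = 0`. -/
theorem three_cycle_polynomial (R x₁ x₂ x₃ l : ℂ)
    (h12 : x₁ ≠ x₂) (h23 : x₂ ≠ x₃) (h13 : x₁ ≠ x₃)
    (h1 : R - x₁ ^ 2 = x₂) (h2 : R - x₂ ^ 2 = x₃) (h3 : R - x₃ ^ 2 = x₁)
    (hl : l = (-2) ^ 3 * (x₁ * x₂ * x₃)) :
    64 * R ^ 3 - 128 * R ^ 2 - 8 * (l - 8) * R - (l - 8) ^ 2 = 0 := by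
  have hc : IsThreeCycle R x₁ x₂ x₃ := ⟨h1, h2, h3⟩
  have hl8 : l - 8 = 8 * (x₁ + x₂ + x₃ - 1) * R := by
    rw [hl]
    exact hc.multiplier_sub_eight h12 h23 h13
  rw [hl8]
  linear_combination 64 * R ^ 2 * hc.parameter_eq h12 h23 h13
end

section
/- For the map f(x) = R - x² with R real, the 3-cycle with multiplier +1 (onset of the period-3 window) occurs exactly at the real root R = 7/4 of (4R - 7)(16R² - 4R + 7) = 0; equivalently, for the logistic map x ↦ rx(1-x) with R = r(r-2)/4, the onset value is r = 1 + √8. -/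
/-!
Write `s = x₁ + x₂ + x₃` for a 3-cycle of `x ↦ R - x²`. Subtracting consecutive cycle equations
gives `xᵢ₊₁ - xᵢ₊₂ = -(xᵢ - xᵢ₊₁)(xᵢ + xᵢ₊₁)`; since the differences of a genuine cycle are
nonzero and sum to zero, this yields `(x₁ + x₂)(x₂ + x₃)(x₃ + x₁) = -1` and the relations
`1 - (xᵢ + xᵢ₊₁) + (xᵢ + xᵢ₊₁)(xᵢ₊₁ + xᵢ₊₂) = 0`. Together with the sum of the cycle equations these
express everything through `s`: `R = s² - s + 2`, and the multiplier is `8s³ - 16s² + 24s - 8`.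
Multiplier `1` means `(2s - 1)(4s² - 6s + 9) = 0`, so over `ℝ` we get `s = 1/2` and `R = 7/4`.
-/

section ThreeCycle

variable {K : Type*} [CommRing K] [NoZeroDivisors K] {R x₁ x₂ x₃ : K}

theorem three_cycle_pair_sum_relation (h₁ : R - x₁ ^ 2 = x₂) (h₂ : R - x₂ ^ 2 = x₃)
    (h₃ : R - x₃ ^ 2 = x₁) (h₁₂ : x₁ ≠ x₂) :
    1 - (x₁ + x₂) + (x₁ + x₂) * (x₂ + x₃) = 0 := by
  have : (x₁ - x₂) * (1 - (x₁ + x₂) + (x₁ + x₂) * (x₂ + x₃)) = 0 := by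
    linear_combination (x₂ + x₃ - 1) * (h₂ - h₁) - (h₃ - h₂)
  exact (mul_eq_zero.mp this).resolve_left (sub_ne_zero.mpr h₁₂)

theorem three_cycle_prod_pair_sums (h₁ : R - x₁ ^ 2 = x₂) (h₂ : R - x₂ ^ 2 = x₃)
    (h₃ : R - x₃ ^ 2 = x₁) (h₁₂ : x₁ ≠ x₂) :
    (x₁ + x₂) * (x₂ + x₃) * (x₃ + x₁) = -1 := by
  have : (x₁ - x₂) * ((x₁ + x₂) * (x₂ + x₃) * (x₃ + x₁) + 1) = 0 := by
    linear_combination (h₁ - h₃) - (x₃ + x₁) * (h₃ - h₂) + (x₂ + x₃) * (x₃ + x₁) * (h₂ - h₁)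
  exact eq_neg_of_add_eq_zero_left <|
    (mul_eq_zero.mp this).resolve_left (sub_ne_zero.mpr h₁₂)

theorem three_cycle_pair_products_eq (h₁ : R - x₁ ^ 2 = x₂) (h₂ : R - x₂ ^ 2 = x₃)
    (h₃ : R - x₃ ^ 2 = x₁) (h₁₂ : x₁ ≠ x₂) (h₂₃ : x₂ ≠ x₃) (h₁₃ : x₁ ≠ x₃) :
    x₁ * x₂ + x₂ * x₃ + x₃ * x₁ = -(x₁ + x₂ + x₃) ^ 2 + 2 * (x₁ + x₂ + x₃) - 3 := by
  linear_combination three_cycle_pair_sum_relation h₁ h₂ h₃ h₁₂ +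
    three_cycle_pair_sum_relation h₂ h₃ h₁ h₂₃ + three_cycle_pair_sum_relation h₃ h₁ h₂ h₁₃.symm

theorem three_cycle_param_eq [NeZero (3 : K)] (h₁ : R - x₁ ^ 2 = x₂) (h₂ : R - x₂ ^ 2 = x₃)
    (h₃ : R - x₃ ^ 2 = x₁) (h₁₂ : x₁ ≠ x₂) (h₂₃ : x₂ ≠ x₃) (h₁₃ : x₁ ≠ x₃) :
    R = (x₁ + x₂ + x₃) ^ 2 - (x₁ + x₂ + x₃) + 2 := by
  have hp := three_cycle_pair_products_eq h₁ h₂ h₃ h₁₂ h₂₃ h₁₃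
  refine mul_left_cancel₀ (NeZero.ne (3 : K)) ?_
  linear_combination h₁ + h₂ + h₃ - 2 * hp

theorem three_cycle_multiplier_eq (h₁ : R - x₁ ^ 2 = x₂) (h₂ : R - x₂ ^ 2 = x₃)
    (h₃ : R - x₃ ^ 2 = x₁) (h₁₂ : x₁ ≠ x₂) (h₂₃ : x₂ ≠ x₃) (h₁₃ : x₁ ≠ x₃) :
    (-2 * x₁) * (-2 * x₂) * (-2 * x₃) =
      8 * (x₁ + x₂ + x₃) ^ 3 - 16 * (x₁ + x₂ + x₃) ^ 2 + 24 * (x₁ + x₂ + x₃) - 8 := by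
  linear_combination 8 * three_cycle_prod_pair_sums h₁ h₂ h₃ h₁₂ -
    8 * (x₁ + x₂ + x₃) * three_cycle_pair_products_eq h₁ h₂ h₃ h₁₂ h₂₃ h₁₃

end ThreeCycle

theorem logistic_param_eq_seven_fourths_iff {r : ℝ} (hr : 0 < r) :
    r * (r - 2) / 4 = 7 / 4 ↔ r = 1 + √8 := by
  have h8 : √8 ^ 2 = 8 := Real.sq_sqrt (by norm_num)
  constructor
  · intro h
    have hroots : (r - (1 + √8)) * (r - (1 - √8)) = 0 := by linear_combination 4 * h - h8
    refine sub_eq_zero.mp ((mul_eq_zero.mp hroots).resolve_right fun h' => ?_)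
    nlinarith [Real.sqrt_nonneg 8]
  · rintro rfl
    linear_combination h8 / 4

/-- For `f(x) = R - x²` with `R` real, a real 3-cycle with multiplier `+1`
(onset of the period-3 window) occurs exactly at the real root `R = 7/4` of
`(4R - 7)(16R² - 4R + 7) = 0`; equivalently, for the logistic map with
`R = r(r-2)/4` and `r > 0`, the onset value is `r = 1 + √8`. -/
theorem three_cycle_onset (R x₁ x₂ x₃ : ℝ)
    (h12 : x₁ ≠ x₂) (h23 : x₂ ≠ x₃) (h13 : x₁ ≠ x₃)
    (h1 : R - x₁ ^ 2 = x₂) (h2 : R - x₂ ^ 2 = x₃) (h3 : R - x₃ ^ 2 = x₁)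
    (hmul : (-2 * x₁) * (-2 * x₂) * (-2 * x₃) = 1) :
    R = 7/4 ∧ (4 * R - 7) * (16 * R ^ 2 - 4 * R + 7) = 0 ∧
    (∀ r : ℝ, 0 < r → (r * (r - 2) / 4 = R ↔ r = 1 + Real.sqrt 8)) := by
  set s := x₁ + x₂ + x₃
  have hs : s = 1 / 2 := by
    have hcubic : 8 * s ^ 3 - 16 * s ^ 2 + 24 * s - 8 = 1 :=
      (three_cycle_multiplier_eq h1 h2 h3 h12 h23 h13).symm.trans hmul
    have hfactor : (2 * s - 1) * (4 * s ^ 2 - 6 * s + 9) = 0 := by linear_combination hcubic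
    have hpos : 0 < 4 * s ^ 2 - 6 * s + 9 := by nlinarith [sq_nonneg (2 * s - 3 / 2)]
    linarith [(mul_eq_zero.mp hfactor).resolve_right hpos.ne']
  have hR : R = 7 / 4 := by
    linear_combination three_cycle_param_eq h1 h2 h3 h12 h23 h13 + (s - 1 / 2) * hs
  subst hR
  exact ⟨rfl, by norm_num, fun r hr => logistic_param_eq_seven_fourths_iff hr⟩
end

section
/- For the map f(x) = R - x², if x₁, x₂, x₃, x₄ is a 4-cycle with all points distinct, then 1 + (x₁ + x₃)(x₂ + x₄) = 0. -/
section FourCycle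

variable {K : Type*} [CommRing K] {R a b c d : K}

/- Since `f x - f y = (y - x) (x + y)`, the cycle gives `b - d = (c - a)(a + c)` and
`c - a = (d - b)(b + d)`; substituting the second into the first yields the identity. -/
theorem sub_mul_one_add_mul_eq_zero_of_four_cycle (ha : R - a ^ 2 = b) (hb : R - b ^ 2 = c)
    (hc : R - c ^ 2 = d) (hd : R - d ^ 2 = a) :
    (b - d) * (1 + (a + c) * (b + d)) = 0 := by
  linear_combination (hc - ha) - (a + c) * (hb - hd)

theorem one_add_mul_eq_zero_of_four_cycle [NoZeroDivisors K] (ha : R - a ^ 2 = b)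
    (hb : R - b ^ 2 = c) (hc : R - c ^ 2 = d) (hd : R - d ^ 2 = a) (hbd : b ≠ d) :
    1 + (a + c) * (b + d) = 0 :=
  (mul_eq_zero.mp (sub_mul_one_add_mul_eq_zero_of_four_cycle ha hb hc hd)).resolve_left
    (sub_ne_zero.mpr hbd)

end FourCycle

theorem four_cycle_relation_general (R x₁ x₂ x₃ x₄ : ℂ)
    (h24 : x₂ ≠ x₄)
    (h1 : R - x₁ ^ 2 = x₂) (h2 : R - x₂ ^ 2 = x₃)
    (h3 : R - x₃ ^ 2 = x₄) (h4 : R - x₄ ^ 2 = x₁) :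
    1 + (x₁ + x₃) * (x₂ + x₄) = 0 :=
  one_add_mul_eq_zero_of_four_cycle h1 h2 h3 h4 h24

/-- For `f(x) = R - x²`, a 4-cycle with all points distinct satisfies
`1 + (x₁ + x₃)(x₂ + x₄) = 0`. -/
theorem four_cycle_relation (R x₁ x₂ x₃ x₄ : ℂ)
    (h12 : x₁ ≠ x₂) (h13 : x₁ ≠ x₃) (h14 : x₁ ≠ x₄)
    (h23 : x₂ ≠ x₃) (h24 : x₂ ≠ x₄) (h34 : x₃ ≠ x₄)
    (h1 : R - x₁ ^ 2 = x₂) (h2 : R - x₂ ^ 2 = x₃)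
    (h3 : R - x₃ ^ 2 = x₄) (h4 : R - x₄ ^ 2 = x₁) :
    1 + (x₁ + x₃) * (x₂ + x₄) = 0 :=
  four_cycle_relation_general R x₁ x₂ x₃ x₄ h24 h1 h2 h3 h4
end

section
/- For a 4-cycle x₁,x₂,x₃,x₄ of f(x) = R - x², setting z = x₁ + x₂ + x₃ + x₄, one has z³ - (4R - 3)z - 4 = 0. -/
/-!
Put `s = x₁ + x₃` and `t = x₂ + x₄`. Subtracting the cycle equations in pairs gives
`(x₂ - x₄) (1 + s t) = 0`, so `s t = -1`. Eliminating the products `x₁ x₃` and `x₂ x₄` from the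
cycle equations leaves a quartic relation between `s` and `t`, which under `s t = -1` collapses to
`s³ + t³ = 4 + 4R (s + t)`. Since `s³ + t³ = z³ - 3 s t z = z³ + 3 z`, this is the cubic for `z`.
-/

section QuadraticFourCycle

variable {K : Type*} [CommRing K]

theorem add_mul_add_eq_neg_one_of_cycle [NoZeroDivisors K] {R x₁ x₂ x₃ x₄ : K}
    (h1 : R - x₁ ^ 2 = x₂) (h2 : R - x₂ ^ 2 = x₃) (h3 : R - x₃ ^ 2 = x₄) (h4 : R - x₄ ^ 2 = x₁)
    (h24 : x₂ ≠ x₄) :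
    (x₁ + x₃) * (x₂ + x₄) = -1 := by
  have hdiff₃₁ : x₃ - x₁ = (x₄ - x₂) * (x₄ + x₂) := by linear_combination h4 - h2
  have hdiff₂₄ : x₂ - x₄ = (x₃ - x₁) * (x₃ + x₁) := by linear_combination h3 - h1
  have : (x₂ - x₄) * ((x₁ + x₃) * (x₂ + x₄) + 1) = 0 := by
    linear_combination (x₃ + x₁) * hdiff₃₁ + hdiff₂₄
  rcases mul_eq_zero.mp this with h | h
  · exact absurd (sub_eq_zero.mp h) h24
  · linear_combination h

theorem quartic_relation_of_cycle {R x₁ x₂ x₃ x₄ : K}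
    (h1 : R - x₁ ^ 2 = x₂) (h2 : R - x₂ ^ 2 = x₃) (h3 : R - x₃ ^ 2 = x₄) (h4 : R - x₄ ^ 2 = x₁) :
    (x₁ + x₃) ^ 4 + 2 * (x₁ + x₃) ^ 2 * (x₂ + x₄) - 4 * R * (x₁ + x₃) ^ 2
      - (x₂ + x₄) ^ 2 - 2 * (x₁ + x₃) + 4 * R = 0 := by
  have hsum₁₃ : 2 * R - x₁ ^ 2 - x₃ ^ 2 = x₂ + x₄ := by linear_combination h1 + h3
  have hsum₂₄ : 2 * R - x₂ ^ 2 - x₄ ^ 2 = x₁ + x₃ := by linear_combination h2 + h4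
  have hprod : (R - x₁ ^ 2) * (R - x₃ ^ 2) = x₂ * x₄ := by
    linear_combination x₄ * h1 + (R - x₁ ^ 2) * h3
  linear_combination -(2 * R - x₁ ^ 2 - x₃ ^ 2 + x₂ + x₄ + 2 * (x₁ + x₃) ^ 2) * hsum₁₃
    + 2 * hsum₂₄ + 4 * hprod

theorem cube_add_cube_of_cycle {R x₁ x₂ x₃ x₄ : K}
    (h1 : R - x₁ ^ 2 = x₂) (h2 : R - x₂ ^ 2 = x₃) (h3 : R - x₃ ^ 2 = x₄) (h4 : R - x₄ ^ 2 = x₁)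
    (hst : (x₁ + x₃) * (x₂ + x₄) = -1) :
    (x₁ + x₃) ^ 3 + (x₂ + x₄) ^ 3 = 4 + 4 * R * (x₁ + x₃ + x₂ + x₄) := by
  set s := x₁ + x₃
  set t := x₂ + x₄
  -- `t` is the inverse of `-s`, so the quartic divided by `s` is the cubic relation.
  linear_combination (-t) * quartic_relation_of_cycle h1 h2 h3 h4
    + (s ^ 3 + 2 * (s * t + 1) - 6 - 4 * R * s) * hst

end QuadraticFourCycle

theorem four_cycle_sum_cubic_general (R x₁ x₂ x₃ x₄ z : ℂ)
    (h24 : x₂ ≠ x₄)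
    (h1 : R - x₁ ^ 2 = x₂) (h2 : R - x₂ ^ 2 = x₃)
    (h3 : R - x₃ ^ 2 = x₄) (h4 : R - x₄ ^ 2 = x₁)
    (hz : z = x₁ + x₂ + x₃ + x₄) :
    z ^ 3 - (4 * R - 3) * z - 4 = 0 := by
  have hst := add_mul_add_eq_neg_one_of_cycle h1 h2 h3 h4 h24
  have hcube := cube_add_cube_of_cycle h1 h2 h3 h4 hst
  subst hz
  linear_combination hcube + 3 * (x₁ + x₂ + x₃ + x₄) * hst

/-- For a 4-cycle `x₁,x₂,x₃,x₄` of `f(x) = R - x²` with all points distinct,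
the sum `z = x₁ + x₂ + x₃ + x₄` satisfies `z³ - (4R - 3)z - 4 = 0`. -/
theorem four_cycle_sum_cubic (R x₁ x₂ x₃ x₄ z : ℂ)
    (h12 : x₁ ≠ x₂) (h13 : x₁ ≠ x₃) (h14 : x₁ ≠ x₄)
    (h23 : x₂ ≠ x₃) (h24 : x₂ ≠ x₄) (h34 : x₃ ≠ x₄)
    (h1 : R - x₁ ^ 2 = x₂) (h2 : R - x₂ ^ 2 = x₃)
    (h3 : R - x₃ ^ 2 = x₄) (h4 : R - x₄ ^ 2 = x₁)
    (hz : z = x₁ + x₂ + x₃ + x₄) :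
    z ^ 3 - (4 * R - 3) * z - 4 = 0 :=
  four_cycle_sum_cubic_general R x₁ x₂ x₃ x₄ z h24 h1 h2 h3 h4 hz
end

section
/- For a 4-cycle x₁,x₂,x₃,x₄ of f(x) = R - x², setting X = x₁x₂x₃x₄ and z = x₁+x₂+x₃+x₄, one has X = (1/2)Rz(1 - z) + R² - R + 1. -/
/-!
Put `u = x₁ + x₃` and `v = x₂ + x₄`. Since `x₁ - x₃ = x₂² - x₄² = (x₂ - x₄) v = -(x₁ - x₃) u v`
and `x₁ ≠ x₃`, we get `uv = -1`. Adding the equations for `x₂` and `x₄` gives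
`2 x₁x₃ = v + u² - 2R`, and likewise `2 x₂x₄ = u + v² - 2R`; expanding
`x₂x₄ = (R - x₁²)(R - x₃²)` then yields a second relation between `u` and `v`, which after
multiplication by `u²` and the substitution `uv = -1` becomes `u³ (z³ - (4R - 3) z - 4) = 0`
for `z = u + v`. Finally `4X = (v + u² - 2R)(u + v² - 2R)` reduces, modulo `uv = -1` and this
cubic, to the claimed formula.
-/

structure IsFourCycle {K : Type*} [CommRing K] (R a b c d : K) : Prop where
  map_a : R - a ^ 2 = b
  map_b : R - b ^ 2 = c
  map_c : R - c ^ 2 = d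
  map_d : R - d ^ 2 = a

namespace IsFourCycle

variable {K : Type*} [CommRing K] {R a b c d : K}

theorem rotate (h : IsFourCycle R a b c d) : IsFourCycle R b c d a :=
  ⟨h.map_b, h.map_c, h.map_d, h.map_a⟩

theorem two_mul_mul_eq (h : IsFourCycle R a b c d) :
    2 * (a * c) = b + d + (a + c) ^ 2 - 2 * R := by
  linear_combination h.map_a + h.map_c

theorem sub_mul_pairSum_mul_add_one (h : IsFourCycle R a b c d) :
    (a - c) * ((a + c) * (b + d) + 1) = 0 := by
  linear_combination (b + d) * (h.map_c - h.map_a) + h.map_b - h.map_d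

theorem pairSum_mul_pairSum [NoZeroDivisors K] (h : IsFourCycle R a b c d) (hac : a ≠ c) :
    (a + c) * (b + d) = -1 := by
  rcases mul_eq_zero.mp h.sub_mul_pairSum_mul_add_one with h' | h'
  · exact absurd (sub_eq_zero.mp h') hac
  · exact eq_neg_of_add_eq_zero_left h'

theorem pairSum_relation (h : IsFourCycle R a b c d) :
    2 * (a + c) + (b + d) ^ 2 - 4 * R - (a + c) ^ 4 - 2 * (a + c) ^ 2 * (b + d)
      + 4 * R * (a + c) ^ 2 = 0 := by
  have hbd : b * d = (R - a ^ 2) * (R - c ^ 2) := by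
    linear_combination (-d) * h.map_a - (R - a ^ 2) * h.map_c
  linear_combination (-2) * h.rotate.two_mul_mul_eq + 4 * hbd
    + (2 * R + 2 * (a * c) + (b + d) + (a + c) ^ 2) * h.two_mul_mul_eq

theorem sum_cubic [IsDomain K] (h : IsFourCycle R a b c d) (hac : a ≠ c) :
    (a + b + c + d) ^ 3 - (4 * R - 3) * (a + b + c + d) - 4 = 0 := by
  have huv := h.pairSum_mul_pairSum hac
  have hu : a + c ≠ 0 := left_ne_zero_of_mul_eq_one (a := a + c) (b := -(b + d)) <| by
    linear_combination -huv
  have hcubic : (a + c) ^ 3 * ((a + b + c + d) ^ 3 - (4 * R - 3) * (a + b + c + d) - 4) = 0 := by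
    linear_combination (-(a + c) ^ 2) * h.pairSum_relation
      + ((a + c) ^ 2 * (b + d) ^ 2 + 3 * (a + c) ^ 3 * (b + d) + 3 * (a + c) ^ 4
        - 2 * (a + c) ^ 3 - 4 * R * (a + c) ^ 2) * huv
  exact (mul_eq_zero.mp hcubic).resolve_left (pow_ne_zero 3 hu)

theorem four_mul_prod_eq [IsDomain K] (h : IsFourCycle R a b c d) (hac : a ≠ c) :
    4 * (a * b * c * d) = 2 * R * (a + b + c + d) * (1 - (a + b + c + d))
      + 4 * (R ^ 2 - R + 1) := by
  linear_combination (2 * (b * d)) * h.two_mul_mul_eq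
    + (b + d + (a + c) ^ 2 - 2 * R) * h.rotate.two_mul_mul_eq
    + h.sum_cubic hac
    + ((a + c) * (b + d) - 3 * (a + b + c + d) + 4 * R) * h.pairSum_mul_pairSum hac

end IsFourCycle

theorem four_cycle_product_general (R x₁ x₂ x₃ x₄ z X : ℂ)
    (h13 : x₁ ≠ x₃)
    (h1 : R - x₁ ^ 2 = x₂) (h2 : R - x₂ ^ 2 = x₃)
    (h3 : R - x₃ ^ 2 = x₄) (h4 : R - x₄ ^ 2 = x₁)
    (hz : z = x₁ + x₂ + x₃ + x₄) (hX : X = x₁ * x₂ * x₃ * x₄) :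
    X = (1/2) * R * z * (1 - z) + R ^ 2 - R + 1 := by
  subst hz hX
  linear_combination (1 / 4) * (IsFourCycle.mk h1 h2 h3 h4).four_mul_prod_eq h13

/-- For a 4-cycle `x₁,x₂,x₃,x₄` of `f(x) = R - x²` with all points distinct,
the product `X = x₁x₂x₃x₄` and the sum `z = x₁+x₂+x₃+x₄` satisfy
`X = (1/2) R z (1 - z) + R² - R + 1`. -/
theorem four_cycle_product (R x₁ x₂ x₃ x₄ z X : ℂ)
    (h12 : x₁ ≠ x₂) (h13 : x₁ ≠ x₃) (h14 : x₁ ≠ x₄)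
    (h23 : x₂ ≠ x₃) (h24 : x₂ ≠ x₄) (h34 : x₃ ≠ x₄)
    (h1 : R - x₁ ^ 2 = x₂) (h2 : R - x₂ ^ 2 = x₃)
    (h3 : R - x₃ ^ 2 = x₄) (h4 : R - x₄ ^ 2 = x₁)
    (hz : z = x₁ + x₂ + x₃ + x₄) (hX : X = x₁ * x₂ * x₃ * x₄) :
    X = (1/2) * R * z * (1 - z) + R ^ 2 - R + 1 :=
  four_cycle_product_general R x₁ x₂ x₃ x₄ z X h13 h1 h2 h3 h4 hz hX
end

section
/- For a 4-cycle of f(x) = R - x² with X = x₁x₂x₃x₄, the parameter R and X satisfy R⁶ - 3R⁵ + (X+3)(R⁴ - R³) - (X+2)(X-1)R² - (X-1)³ = 0. -/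
/-!
The points `x₁, x₃` and `x₂, x₄` form two 2-cycles of `f ∘ f` that `f` exchanges. Subtracting the
cycle equations gives `(x₁ + x₃)(x₂ + x₄) = -1` as soon as `x₁ ≠ x₃`. Writing the symmetric
functions of each pair through those of the other then shows that `σ = x₁ + x₂ + x₃ + x₄` satisfies
`σ³ + (3 - 4R)σ = 4` and `4X = σ³ + 3σ - 2R(σ² + σ + 2) + 4R²`; eliminating `σ` between these two
equations leaves the stated relation between `R` and `X`.
-/

section QuadraticFourCycle

variable {K : Type*} {R x₁ x₂ x₃ x₄ : K}

theorem add_mul_add_eq_neg_one_of_four_cycle [CommRing K] [NoZeroDivisors K] (h13 : x₁ ≠ x₃)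
    (h1 : R - x₁ ^ 2 = x₂) (h2 : R - x₂ ^ 2 = x₃) (h3 : R - x₃ ^ 2 = x₄) (h4 : R - x₄ ^ 2 = x₁) :
    (x₁ + x₃) * (x₂ + x₄) = -1 := by
  have h : (x₁ - x₃) * ((x₁ + x₃) * (x₂ + x₄) + 1) = 0 := by
    linear_combination h2 - h4 + (x₂ + x₄) * (h3 - h1)
  exact eq_neg_of_add_eq_zero_left <| (mul_eq_zero.mp h).resolve_left (sub_ne_zero.mpr h13)

variable [CommRing K]

theorem sum_cubic_eq_zero_of_four_cycle (hst : (x₁ + x₃) * (x₂ + x₄) = -1)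
    (h1 : R - x₁ ^ 2 = x₂) (h2 : R - x₂ ^ 2 = x₃) (h3 : R - x₃ ^ 2 = x₄) (h4 : R - x₄ ^ 2 = x₁) :
    (x₁ + x₂ + x₃ + x₄) ^ 3 + (3 - 4 * R) * (x₁ + x₂ + x₃ + x₄) - 4 = 0 := by
  set s := x₁ + x₃
  set t := x₂ + x₄
  have hsum₁₃ : s ^ 2 + t - 2 * R = 2 * (x₁ * x₃) := by linear_combination -(h1 + h3)
  have hsum₂₄ : t ^ 2 + s - 2 * R = 2 * (x₂ * x₄) := by linear_combination -(h2 + h4)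
  have hprod₂₄ : x₂ * x₄ = (x₁ * x₃) ^ 2 + R * t - R ^ 2 := by
    linear_combination (R - x₄) * h1 + x₁ ^ 2 * h3
  have hquartic : s ^ 4 + 2 * s ^ 2 * t - t ^ 2 - 2 * s - 4 * R * s ^ 2 + 4 * R = 0 := by
    linear_combination (s ^ 2 + t - 2 * R + 2 * (x₁ * x₃)) * hsum₁₃ - 2 * hsum₂₄ - 4 * hprod₂₄
  -- modulo `s * t + 1`, the left side of `hquartic` is `s` times the cubic, and `s⁻¹ = -t`
  linear_combination (-t) * hquartic
    + (t * (-3 * s ^ 2 + 2 * s - t ^ 2 - 3 * s * t + 4 * R)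
      + ((s + t) ^ 3 + (3 - 4 * R) * (s + t) - 4)) * hst

theorem four_mul_prod_eq_of_four_cycle (hst : (x₁ + x₃) * (x₂ + x₄) = -1)
    (h1 : R - x₁ ^ 2 = x₂) (h2 : R - x₂ ^ 2 = x₃) (h3 : R - x₃ ^ 2 = x₄) (h4 : R - x₄ ^ 2 = x₁) :
    4 * (x₁ * x₂ * x₃ * x₄) = (x₁ + x₂ + x₃ + x₄) ^ 3 + 3 * (x₁ + x₂ + x₃ + x₄)
      - 2 * R * ((x₁ + x₂ + x₃ + x₄) ^ 2 + (x₁ + x₂ + x₃ + x₄) + 2) + 4 * R ^ 2 := by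
  set s := x₁ + x₃
  set t := x₂ + x₄
  have hsum₁₃ : s ^ 2 + t - 2 * R = 2 * (x₁ * x₃) := by linear_combination -(h1 + h3)
  have hsum₂₄ : t ^ 2 + s - 2 * R = 2 * (x₂ * x₄) := by linear_combination -(h2 + h4)
  linear_combination (-(2 * (x₂ * x₄))) * hsum₁₃ - (s ^ 2 + t - 2 * R) * hsum₂₄
    + (s * t - 3 * (s + t) + 4 * R) * hst

end QuadraticFourCycle

theorem characteristic_eq_zero_of_sum_relations {K : Type*} [Field K] [NeZero (2 : K)]
    {R X σ : K} (hσ : σ ^ 3 + (3 - 4 * R) * σ - 4 = 0)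
    (hX : 4 * X = σ ^ 3 + 3 * σ - 2 * R * (σ ^ 2 + σ + 2) + 4 * R ^ 2) :
    R ^ 6 - 3 * R ^ 5 + (X + 3) * (R ^ 4 - R ^ 3)
      - (X + 2) * (X - 1) * R ^ 2 - (X - 1) ^ 3 = 0 := by
  set a := -R ^ 2 + R + 1 - X
  set b := R ^ 2 - 3 * R + 1 - X
  have hquad : R * σ ^ 2 - R * σ = 2 * (R ^ 2 - R + 1 - X) := by
    refine mul_left_cancel₀ (two_ne_zero (α := K)) ?_
    linear_combination hX + hσ
  -- `R` times the cubic, reduced by `hquad`, is linear in `σ`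
  have hlin : a * σ + b = 0 := by
    refine mul_left_cancel₀ (two_ne_zero (α := K)) ?_
    linear_combination R * hσ - (σ + 1) * hquad
  refine mul_left_cancel₀ (two_ne_zero (α := K)) ?_
  linear_combination (-a ^ 2) * hquad + R * (a * σ - b - a) * hlin

theorem four_cycle_characteristic_general (R x₁ x₂ x₃ x₄ X : ℂ)
    (h13 : x₁ ≠ x₃)
    (h1 : R - x₁ ^ 2 = x₂) (h2 : R - x₂ ^ 2 = x₃)
    (h3 : R - x₃ ^ 2 = x₄) (h4 : R - x₄ ^ 2 = x₁)
    (hX : X = x₁ * x₂ * x₃ * x₄) :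
    R ^ 6 - 3 * R ^ 5 + (X + 3) * (R ^ 4 - R ^ 3)
      - (X + 2) * (X - 1) * R ^ 2 - (X - 1) ^ 3 = 0 := by
  have hst := add_mul_add_eq_neg_one_of_four_cycle h13 h1 h2 h3 h4
  refine characteristic_eq_zero_of_sum_relations (sum_cubic_eq_zero_of_four_cycle hst h1 h2 h3 h4) ?_
  rw [hX]
  exact four_mul_prod_eq_of_four_cycle hst h1 h2 h3 h4

/-- For a 4-cycle of `f(x) = R - x²` with `X = x₁x₂x₃x₄`, the parameter `R`
and `X` satisfy `R⁶ - 3R⁵ + (X+3)(R⁴ - R³) - (X+2)(X-1)R² - (X-1)³ = 0`. -/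
theorem four_cycle_characteristic (R x₁ x₂ x₃ x₄ X : ℂ)
    (h12 : x₁ ≠ x₂) (h13 : x₁ ≠ x₃) (h14 : x₁ ≠ x₄)
    (h23 : x₂ ≠ x₃) (h24 : x₂ ≠ x₄) (h34 : x₃ ≠ x₄)
    (h1 : R - x₁ ^ 2 = x₂) (h2 : R - x₂ ^ 2 = x₃)
    (h3 : R - x₃ ^ 2 = x₄) (h4 : R - x₄ ^ 2 = x₁)
    (hX : X = x₁ * x₂ * x₃ * x₄) :
    R ^ 6 - 3 * R ^ 5 + (X + 3) * (R ^ 4 - R ^ 3)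
      - (X + 2) * (X - 1) * R ^ 2 - (X - 1) ^ 3 = 0 :=
  four_cycle_characteristic_general R x₁ x₂ x₃ x₄ X h13 h1 h2 h3 h4 hX
end

section
/- For each R ∈ ℂ except finitely many, the n-th iterate of f(x) = R - x² has exactly 2^n distinct fixed points in ℂ; equivalently, the polynomial f^[n](x) - x of degree 2^n has no repeated root for generic R. In particular, at R = 0 the polynomial -x^{2^n} - x has no repeated root. -/
/-!
View `x - f_R^[n] x` as a monic polynomial `Q` of degree `2 ^ n` in `x` with coefficients in
`ℂ[R]`. Specialising `R` preserves the degree, hence commutes with the resultant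
`Res_x(Q, ∂Q/∂x) ∈ ℂ[R]`, so the specialisation at `r` is separable exactly when this resultant
does not vanish at `r`. At `R = 0` the specialisation is `x ^ 2 ^ n + x`, which is separable, so
the resultant is a nonzero polynomial with finitely many roots; at every other `r` the
`2 ^ n` roots of the specialisation are distinct.
-/

open Polynomial

namespace Polynomial

theorem resultant_derivative_map {R S : Type*} [CommRing R] [CommRing S] [IsAddTorsionFree R]
    [IsAddTorsionFree S] (φ : R →+* S) {f : R[X]} (hf : (f.map φ).natDegree = f.natDegree) :
    resultant (f.map φ) (derivative (f.map φ)) = φ (resultant f (derivative f)) := by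
  rw [← resultant_map_map, ← derivative_map, natDegree_derivative, natDegree_derivative, hf,
    derivative_map]

theorem separable_iff_resultant_derivative_ne_zero {K : Type*} [Field K] {f : K[X]}
    (hf : f ≠ 0) : f.Separable ↔ resultant f (derivative f) ≠ 0 := by
  simp [separable_def, resultant_eq_zero_iff, hf]

theorem Monic.finite_setOf_not_separable_map {K : Type*} [Field K] [CharZero K] {Q : K[X][X]}
    (hQ : Q.Monic) {r₀ : K} (hr₀ : (Q.map (evalRingHom r₀)).Separable) :
    {r : K | ¬(Q.map (evalRingHom r)).Separable}.Finite := by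
  have hspec (r : K) :
      (Q.map (evalRingHom r)).Separable ↔ (resultant Q (derivative Q)).eval r ≠ 0 := by
    rw [separable_iff_resultant_derivative_ne_zero (hQ.map _).ne_zero,
      resultant_derivative_map _ (hQ.natDegree_map _), coe_evalRingHom]
  have hD : resultant Q (derivative Q) ≠ 0 := fun h => (hspec r₀).mp hr₀ (by rw [h, eval_zero])
  refine (finite_setOfPred_isRoot hD).subset fun r hr => ?_
  simpa [hspec] using hr

/-- With `m = j + 2`: `x ^ m + x = x (x ^ (j + 1) + 1)` and the derivative is
`m x ^ (j + 1) + 1 = 1 + x (m x ^ j) = (1 - m) + m (x ^ (j + 1) + 1)`, coprime to each factor. -/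
theorem separable_X_pow_add_X {K : Type*} [Field K] [CharZero K] {m : ℕ} (hm : 1 < m) :
    (X ^ m + X : K[X]).Separable := by
  obtain ⟨j, rfl⟩ := Nat.exists_eq_add_of_le' hm
  have hderiv : derivative (X ^ (j + 2) + X : K[X]) = ((j + 2 : ℕ) : K[X]) * X ^ (j + 1) + 1 := by
    rw [derivative_add, derivative_X_pow, derivative_X, map_natCast]
    rfl
  have hunit : IsUnit (C ((1 : K) - (j + 2 : ℕ))) :=
    isUnit_C.mpr (sub_ne_zero.mpr (by norm_cast; omega)).isUnit
  rw [separable_def, hderiv, show (X ^ (j + 2) + X : K[X]) = X * (X ^ (j + 1) + 1) by ring]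
  refine IsCoprime.mul_left ?_ ?_
  · rw [show ((j + 2 : ℕ) : K[X]) * X ^ (j + 1) + 1 = 1 + X * (((j + 2 : ℕ) : K[X]) * X ^ j) by
      ring]
    exact isCoprime_one_right.add_mul_left_right _
  · rw [show ((j + 2 : ℕ) : K[X]) * X ^ (j + 1) + 1 =
        1 * C ((1 : K) - (j + 2 : ℕ)) + (X ^ (j + 1) + 1) * ((j + 2 : ℕ) : K[X]) by
      simp only [map_sub, map_one, map_natCast]; ring]
    exact ((isCoprime_mul_unit_right_right hunit _ 1).mpr isCoprime_one_right).add_mul_left_right _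

theorem Separable.ncard_setOf_isRoot {K : Type*} [Field K] [IsAlgClosed K] {f : K[X]}
    (hf : f.Separable) : {x | f.IsRoot x}.ncard = f.natDegree := by
  classical
  rw [show {x | f.IsRoot x} = (f.roots.toFinset : Set K) by ext; simp [hf.ne_zero],
    Set.ncard_coe_finset, Multiset.toFinset_card_of_nodup (nodup_roots hf),
    (IsAlgClosed.splits f).natDegree_eq_card_roots]

theorem map_iterate_comp {A B : Type*} [CommRing A] [CommRing B] (φ : A →+* B) (p q : A[X])
    (n : ℕ) : (p.comp^[n] q).map φ = (p.map φ).comp^[n] (q.map φ) := by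
  induction n with
  | zero => rfl
  | succ n ih => rw [Function.iterate_succ_apply', Function.iterate_succ_apply', map_comp, ih]

end Polynomial

section QuadraticFamily

variable {A : Type*} [CommRing A]

theorem natDegree_C_sub_X_sq [Nontrivial A] (c : A) : (C c - X ^ 2 : A[X]).natDegree = 2 := by
  rw [← neg_sub, natDegree_neg, natDegree_X_pow_sub_C]

theorem leadingCoeff_C_sub_X_sq [Nontrivial A] (c : A) :
    (C c - X ^ 2 : A[X]).leadingCoeff = -1 := by
  rw [← neg_sub, leadingCoeff_neg, leadingCoeff_X_pow_sub_C two_pos]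

theorem natDegree_quadratic_iterate [IsDomain A] (c : A) (n : ℕ) :
    ((C c - X ^ 2).comp^[n] X).natDegree = 2 ^ n := by
  rw [natDegree_iterate_comp, natDegree_C_sub_X_sq, natDegree_X, mul_one]

theorem leadingCoeff_quadratic_iterate [IsDomain A] (c : A) (n : ℕ) :
    ((C c - X ^ 2).comp^[n + 1] X).leadingCoeff = -1 := by
  induction n with
  | zero => simp [leadingCoeff_C_sub_X_sq]
  | succ n ih =>
    rw [Function.iterate_succ_apply',
      leadingCoeff_comp (by rw [natDegree_quadratic_iterate]; positivity), ih,
      leadingCoeff_C_sub_X_sq, natDegree_C_sub_X_sq]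
    norm_num

theorem natDegree_X_lt_quadratic_iterate [IsDomain A] (c : A) {n : ℕ} (hn : 0 < n) :
    (X : A[X]).natDegree < ((C c - X ^ 2).comp^[n] X).natDegree := by
  rw [natDegree_quadratic_iterate, natDegree_X]
  exact Nat.one_lt_two_pow hn.ne'

theorem quadratic_iterate_zero (n : ℕ) :
    (C 0 - X ^ 2 : A[X]).comp^[n + 1] X = -X ^ (2 ^ (n + 1)) := by
  induction n with
  | zero => simp
  | succ n ih =>
    rw [Function.iterate_succ_apply', ih, pow_succ 2 (n + 1), pow_mul]
    simp

/-- Over `A = K[R]` with `c = X` this is the whole family at once; `fixedPointPoly_map`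
specialises it to a single parameter. -/
noncomputable def fixedPointPoly (c : A) (n : ℕ) : A[X] := X - (C c - X ^ 2).comp^[n] X

theorem fixedPointPoly_map {B : Type*} [CommRing B] (φ : A →+* B) (c : A) (n : ℕ) :
    (fixedPointPoly c n).map φ = fixedPointPoly (φ c) n := by
  simp [fixedPointPoly, map_iterate_comp]

theorem isRoot_fixedPointPoly {c x : A} {n : ℕ} :
    (fixedPointPoly c n).IsRoot x ↔ (fun y => c - y ^ 2)^[n] x = x := by
  rw [IsRoot.def, fixedPointPoly, eval_sub, eval_X, iterate_comp_eval, eval_X, sub_eq_zero,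
    eq_comm]
  simp only [eval_sub, eval_C, eval_pow, eval_X]

theorem natDegree_fixedPointPoly [IsDomain A] (c : A) {n : ℕ} (hn : 0 < n) :
    (fixedPointPoly c n).natDegree = 2 ^ n := by
  rw [fixedPointPoly, natDegree_sub_eq_right_of_natDegree_lt
    (natDegree_X_lt_quadratic_iterate c hn), natDegree_quadratic_iterate]

theorem monic_fixedPointPoly [IsDomain A] (c : A) {n : ℕ} (hn : 0 < n) :
    (fixedPointPoly c n).Monic := by
  obtain ⟨n, rfl⟩ := Nat.exists_eq_add_of_le' hn
  rw [Monic, fixedPointPoly, leadingCoeff_sub_of_degree_lt'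
    (degree_lt_degree (natDegree_X_lt_quadratic_iterate c hn)), leadingCoeff_quadratic_iterate,
    neg_neg]

theorem fixedPointPoly_zero {n : ℕ} (hn : 0 < n) :
    fixedPointPoly (0 : A) n = X ^ (2 ^ n) + X := by
  obtain ⟨n, rfl⟩ := Nat.exists_eq_add_of_le' hn
  rw [fixedPointPoly, quadratic_iterate_zero]
  ring

theorem separable_fixedPointPoly_zero {K : Type*} [Field K] [CharZero K] {n : ℕ} (hn : 0 < n) :
    (fixedPointPoly (0 : K) n).Separable := by
  rw [fixedPointPoly_zero hn]
  exact separable_X_pow_add_X (Nat.one_lt_two_pow hn.ne')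

end QuadraticFamily

/-- For all but finitely many `R ∈ ℂ`, the `n`-th iterate of `f(x) = R - x²`
has exactly `2^n` distinct fixed points; in particular, at `R = 0` the
polynomial `-x^(2^n) - x` has no repeated root. -/
theorem generic_iterate_fixed_points (n : ℕ) (hn : 0 < n) :
    {R : ℂ | Set.ncard {x : ℂ | (fun y : ℂ => R - y ^ 2)^[n] x = x} ≠ 2 ^ n}.Finite ∧
    (-(Polynomial.X ^ (2 ^ n)) - Polynomial.X : Polynomial ℂ).roots.Nodup := by
  have hspec (r : ℂ) : (fixedPointPoly (X : ℂ[X]) n).map (evalRingHom r) = fixedPointPoly r n := by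
    rw [fixedPointPoly_map, coe_evalRingHom, eval_X]
  have hsep₀ := hspec 0 ▸ separable_fixedPointPoly_zero hn
  refine ⟨((monic_fixedPointPoly X hn).finite_setOf_not_separable_map hsep₀).subset
    fun r hr hsep => hr ?_, ?_⟩
  · rw [hspec] at hsep
    rw [← natDegree_fixedPointPoly r hn, ← hsep.ncard_setOf_isRoot]
    simp only [isRoot_fixedPointPoly]
  · rw [show -(X ^ (2 ^ n)) - X = -fixedPointPoly (0 : ℂ) n by rw [fixedPointPoly_zero hn]; ring,
      roots_neg]
    exact nodup_roots (separable_fixedPointPoly_zero hn)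
end

section
/- The number of ternary necklaces of length n with even weight (sum of entries even) equals N_e(n) = (1/n) Σ_{cd = n} φ(c) [3^d − odd(c)·(3^d − 1)/2], where odd(c) = 1 if c is odd and 0 if c is even. -/
open Finset

theorem two_mul_card_even_weight_fin_three (ι : Type*) [Fintype ι] :
    2 * Nat.card {F : ι → Fin 3 // Even (∑ i, (F i).val)} = 3 ^ Fintype.card ι + 1 := by
  classical
  let wt (F : ι → Fin 3) : ℕ := ∑ i, (F i).val
  have signed : ∑ F, (-1 : ℤ) ^ wt F = 1 := by
    simp_rw [wt, ← prod_pow_eq_pow_sum]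
    rw [← Fintype.prod_sum (fun (_ : ι) (a : Fin 3) => (-1 : ℤ) ^ a.val)]
    simp [Fin.sum_univ_three]
  have even_sub_odd : (#{F | Even (wt F)} : ℤ) - #{F | ¬Even (wt F)} = 1 := by
    rw [← signed, ← sum_filter_add_sum_filter_not univ (fun F => Even (wt F)),
      sum_congr rfl fun F hF => (mem_filter.mp hF).2.neg_one_pow,
      sum_congr rfl fun F hF => (Nat.not_even_iff_odd.mp (mem_filter.mp hF).2).neg_one_pow]
    simp [sub_eq_add_neg]
  have even_add_odd : #{F | Even (wt F)} + #{F | ¬Even (wt F)} = 3 ^ Fintype.card ι := by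
    rw [card_filter_add_card_filter_not]
    simp
  rw [Nat.card_eq_fintype_card, Fintype.card_subtype]
  change 2 * #{F | Even (wt F)} = _
  omega

theorem card_even_mul_weight_fin_three (ι : Type*) [Fintype ι] (c : ℕ) :
    (Nat.card {F : ι → Fin 3 // Even (c * ∑ i, (F i).val)} : ℚ) =
      3 ^ Fintype.card ι - (if Odd c then 1 else 0) * (3 ^ Fintype.card ι - 1) / 2 := by
  rcases Nat.even_or_odd c with hc | hc
  · rw [Nat.card_congr (Equiv.subtypeUnivEquiv fun F => hc.mul_right _)]
    simp [Nat.not_odd_iff_even.mpr hc, Nat.card_fun, Nat.card_eq_fintype_card]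
  · have hiff (F : ι → Fin 3) : Even (c * ∑ i, (F i).val) ↔ Even (∑ i, (F i).val) := by
      simp [Nat.even_mul, Nat.not_even_iff_odd.mpr hc]
    have two_mul_card := two_mul_card_even_weight_fin_three ι
    rw [← Nat.card_congr (Equiv.subtypeEquivRight hiff)] at two_mul_card
    qify at two_mul_card
    rw [if_pos hc]
    linarith

theorem QuotientAddGroup.sum_comp_mk {G M : Type*} [AddGroup G] [Fintype G] [AddCommMonoid M]
    (H : AddSubgroup G) [Fintype (G ⧸ H)] (g : G ⧸ H → M) :
    ∑ i : G, g i = Nat.card H • ∑ q, g q := by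
  classical
  rw [← Fintype.sum_fiberwise' (QuotientAddGroup.mk : G → G ⧸ H), smul_sum]
  refine sum_congr rfl fun q _ => ?_
  rw [sum_const, card_univ, ← Nat.card_eq_fintype_card]
  congr 1
  exact (Nat.card_congr (QuotientAddGroup.preimageMkEquivAddSubgroupProdSet H {q})).trans (by simp)

section Rotation

variable {G α : Type*} [AddGroup G] [Fintype G] (w : α → ℕ)

theorem sum_weight_comp_add_right (f : G → α) (k : G) :
    ∑ i, w (f (i + k)) = ∑ i, w (f i) :=
  Fintype.sum_equiv (Equiv.addRight k) _ _ fun _ => rfl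

-- A `def`, not an `abbrev`: instance search cannot unify `w` inside the bare subtype.
variable (G) in
def EvenWeightString : Type _ := {f : G → α // Even (∑ i, w (f i))}

instance : AddAction G (EvenWeightString G w) where
  vadd k f := ⟨fun i => f.1 (i + k), by rw [sum_weight_comp_add_right]; exact f.2⟩
  zero_vadd f := Subtype.ext <| funext fun i => congrArg f.1 (add_zero i)
  add_vadd k k' f := Subtype.ext <| funext fun i => congrArg f.1 (add_assoc i k k').symm

instance [Finite α] : Finite (EvenWeightString G w) := Subtype.finite

theorem EvenWeightString.vadd_apply (k : G) (f : EvenWeightString G w) (i : G) :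
    (k +ᵥ f).1 i = f.1 (i + k) := rfl

def Function.periodicEquivQuotient (k : G) :
    {f : G → α // Function.Periodic f k} ≃ (G ⧸ AddSubgroup.zmultiples k → α) where
  toFun f := f.2.lift
  invFun F := ⟨fun i => F i, fun i => congrArg F <|
    QuotientAddGroup.mk_add_of_mem i (AddSubgroup.mem_zmultiples k)⟩
  left_inv _ := rfl
  right_inv _ := funext fun q => QuotientAddGroup.induction_on q fun _ => rfl

theorem sum_weight_comp_mk (k : G) [Fintype (G ⧸ AddSubgroup.zmultiples k)]
    (F : G ⧸ AddSubgroup.zmultiples k → α) :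
    ∑ i : G, w (F i) = addOrderOf k * ∑ q, w (F q) := by
  rw [QuotientAddGroup.sum_comp_mk _ fun q => w (F q), Nat.card_zmultiples, smul_eq_mul]

namespace EvenWeightString

def fixedByEquiv (k : G) [Fintype (G ⧸ AddSubgroup.zmultiples k)] :
    AddAction.fixedBy (EvenWeightString G w) k ≃
      {F : G ⧸ AddSubgroup.zmultiples k → α // Even (addOrderOf k * ∑ q, w (F q))} where
  toFun f := ⟨Function.periodicEquivQuotient k ⟨f.1.1, congrFun (congrArg Subtype.val f.2)⟩,
    by rw [← sum_weight_comp_mk]; exact f.1.2⟩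
  invFun F := ⟨⟨fun i => F.1 i, by rw [sum_weight_comp_mk]; exact F.2⟩,
    Subtype.ext <| funext fun i => ((Function.periodicEquivQuotient k).symm F.1).2 i⟩
  left_inv _ := rfl
  right_inv F := Subtype.ext ((Function.periodicEquivQuotient k).right_inv F.1)

theorem card_fixedBy_fin_three (k : G) :
    (Nat.card (AddAction.fixedBy (EvenWeightString G (Fin.val : Fin 3 → ℕ)) k) : ℚ) =
      3 ^ (Nat.card G / addOrderOf k) -
        (if Odd (addOrderOf k) then 1 else 0) * (3 ^ (Nat.card G / addOrderOf k) - 1) / 2 := by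
  have : Fintype (G ⧸ AddSubgroup.zmultiples k) := Fintype.ofFinite _
  have card_quotient :
      Fintype.card (G ⧸ AddSubgroup.zmultiples k) = Nat.card G / addOrderOf k := by
    rw [AddSubgroup.card_eq_card_quotient_mul_card_addSubgroup (AddSubgroup.zmultiples k),
      Nat.card_zmultiples, Nat.mul_div_cancel _ (addOrderOf_pos k), Nat.card_eq_fintype_card]
  rw [Nat.card_congr (fixedByEquiv _ k), card_even_mul_weight_fin_three, card_quotient]

end EvenWeightString

end Rotation

theorem IsAddCyclic.sum_comp_addOrderOf {G M : Type*} [AddGroup G] [IsAddCyclic G] [Fintype G]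
    [Semiring M] {n : ℕ} (hn : Fintype.card G = n) (h : ℕ → M) :
    ∑ g : G, h (addOrderOf g) = ∑ c ∈ n.divisors, (c.totient : M) * h c := by
  classical
  subst hn
  rw [← sum_fiberwise_of_maps_to' (t := (Fintype.card G).divisors)
    fun g _ => Nat.mem_divisors.mpr ⟨addOrderOf_dvd_card, Fintype.card_ne_zero⟩]
  refine sum_congr rfl fun c hc => ?_
  rw [sum_const, IsAddCyclic.card_addOrderOf_eq_totient (Nat.dvd_of_mem_divisors hc),
    nsmul_eq_mul]

theorem AddAction.card_quotient_mul_card_eq_sum_card_fixedBy (G X : Type*) [AddGroup G]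
    [Fintype G] [AddAction G X] [Finite X] :
    Nat.card (Quotient (AddAction.orbitRel G X)) * Nat.card G =
      ∑ g : G, Nat.card (AddAction.fixedBy X g) := by
  classical
  have : Fintype X := Fintype.ofFinite X
  simp only [Nat.card_eq_fintype_card]
  exact (AddAction.sum_card_fixedBy_eq_card_orbits_mul_card_addGroup G X).symm

theorem rotSetoid_comap_eq_orbitRel {α : Type*} (n : ℕ) [NeZero n] (w : α → ℕ) :
    (rotSetoid n α).comap (Subtype.val : {f : ZMod n → α // Even (∑ i, w (f i))} → _) =
      AddAction.orbitRel (ZMod n) (EvenWeightString (ZMod n) w) := by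
  refine Setoid.ext fun (f g : EvenWeightString (ZMod n) w) => ?_
  change (∃ k : ZMod n, ∀ i, g.1 i = f.1 (i + k)) ↔ ∃ m : ZMod n, m +ᵥ g = f
  constructor
  · rintro ⟨k, hk⟩
    exact ⟨-k, Subtype.ext <| funext fun i => by
      rw [EvenWeightString.vadd_apply, hk, neg_add_cancel_right]⟩
  · rintro ⟨k, rfl⟩
    exact ⟨-k, fun i => by rw [EvenWeightString.vadd_apply, neg_add_cancel_right]⟩

/-- The number of ternary necklaces of length `n` with even weight equals
`N_e(n) = (1/n) ∑_{cd = n} φ(c) [3^d − odd(c)·(3^d − 1)/2]`. -/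
theorem even_ternary_necklace_count (n : ℕ) [NeZero n] :
    (Nat.card (Quotient ((rotSetoid n (Fin 3)).comap
        (Subtype.val : {f : ZMod n → Fin 3 // Even (∑ i, (f i).val)} →
          (ZMod n → Fin 3)))) : ℚ) =
      (1 / (n : ℚ)) * ∑ c ∈ n.divisors, (Nat.totient c : ℚ) *
        (3 ^ (n / c) - (if Odd c then 1 else 0) * (3 ^ (n / c) - 1) / 2) := by
  rw [rotSetoid_comap_eq_orbitRel, one_div, inv_mul_eq_div, eq_div_iff (NeZero.ne _)]
  have burnside := AddAction.card_quotient_mul_card_eq_sum_card_fixedBy (ZMod n)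
    (EvenWeightString (ZMod n) (Fin.val : Fin 3 → ℕ))
  rw [Nat.card_zmod] at burnside
  calc _ = ∑ k : ZMod n, (Nat.card (AddAction.fixedBy
          (EvenWeightString (ZMod n) (Fin.val : Fin 3 → ℕ)) k) : ℚ) := by
        exact_mod_cast burnside
    _ = _ := by
      simp_rw [EvenWeightString.card_fixedBy_fin_three, Nat.card_zmod]
      rw [← IsAddCyclic.sum_comp_addOrderOf (ZMod.card n)]
end

section
/- Let L_e(n) = (1/n) Σ_{cd = n} μ(c)[1 + odd(c)·(3^d − 1)/2] and N_e(n) = (1/n) Σ_{cd = n} φ(c)[3^d − odd(c)·(3^d − 1)/2], where odd(c) is 1 for odd c and 0 for even c. Then N_e(n) = Σ_{d|n} L_e(d) for all positive integers n. -/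
/-!
Put `h k = (3 ^ k - 1) / 2`, so that `3 ^ k = 1 + 2 h k`. Since `φ (2c) = (2 - odd c) φ c`,
`n N_e(n) = n + ∑_{c ∣ n} φ(2c) h(n/c)`. On the other side `∑_{c ∣ d} μ c = [d = 1]`, so
`n ∑_{d ∣ n} L_e(d)` is the value at `n` of the Dirichlet convolution `(1 + (μ·odd) * h) * id`,
and the identity `(μ·odd) * id = φ(2·)` turns it into the same expression. That identity is
`μ * id = φ` for odd `n`; doubling `n` keeps its odd divisors and doubles each `n / c`, just as
it doubles `φ (2n)`.
-/

open Finset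
open scoped ArithmeticFunction.Moebius Nat

namespace Nat

theorem filter_odd_divisors_two_mul (n : ℕ) :
    {c ∈ (2 * n).divisors | Odd c} = {c ∈ n.divisors | Odd c} := by
  ext c
  simp only [mem_filter, mem_divisors, and_congr_left_iff]
  intro hc
  rw [(coprime_two_right.mpr hc).dvd_mul_left]
  omega

end Nat

namespace ArithmeticFunction

theorem sum_divisors_moebius_mul_div_eq_totient {R : Type*} [NonAssocRing R] (n : ℕ) :
    ∑ c ∈ n.divisors, (μ c : R) * (n / c : ℕ) = φ n := by
  rcases n.eq_zero_or_pos with rfl | hn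
  · simp
  rw [← Nat.sum_divisorsAntidiagonal (fun a b => (μ a : R) * b)]
  refine (sum_eq_iff_sum_mul_moebius_eq (f := fun m => (φ m : R))).mp (fun m _ => ?_) n hn
  rw [← Nat.cast_sum, m.sum_totient]

theorem sum_odd_divisors_moebius_mul_div_eq_totient_two_mul {R : Type*} [Ring R] (n : ℕ) :
    ∑ c ∈ n.divisors with Odd c, (μ c : R) * (n / c : ℕ) = φ (2 * n) := by
  induction n using Nat.strong_induction_on with
  | _ n ih =>
    rcases n.even_or_odd with ⟨k, rfl⟩ | hn
    · rcases k.eq_zero_or_pos with rfl | hk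
      · simp
      rw [← two_mul, Nat.filter_odd_divisors_two_mul, Nat.totient_two_mul_of_even (even_two_mul k),
        Nat.cast_mul, ← ih k (by omega), mul_sum]
      refine sum_congr rfl fun c hc => ?_
      rw [Nat.mul_div_assoc 2 (Nat.dvd_of_mem_divisors (mem_filter.mp hc).1)]
      push_cast
      exact (Commute.ofNat_right _ 2).left_comm _
    · rw [filter_true_of_mem fun c hc => hn.of_dvd_nat (Nat.dvd_of_mem_divisors hc),
        Nat.totient_two_mul_of_odd hn, sum_divisors_moebius_mul_div_eq_totient]

def oddIndicator (R : Type*) [Zero R] [One R] : ArithmeticFunction R :=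
  ⟨fun n => if Odd n then 1 else 0, by simp⟩

@[simp]
theorem oddIndicator_apply {R : Type*} [Zero R] [One R] (n : ℕ) :
    oddIndicator R n = if Odd n then 1 else 0 :=
  rfl

def totientTwoMul (R : Type*) [AddMonoidWithOne R] : ArithmeticFunction R :=
  ⟨fun n => (φ (2 * n) : R), by simp⟩

@[simp]
theorem totientTwoMul_apply {R : Type*} [AddMonoidWithOne R] (n : ℕ) :
    totientTwoMul R n = φ (2 * n) :=
  rfl

theorem mul_apply_eq_sum_divisors {R : Type*} [Semiring R] (f g : ArithmeticFunction R) (n : ℕ) :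
    (f * g) n = ∑ c ∈ n.divisors, f c * g (n / c) := by
  rw [mul_apply, Nat.sum_divisorsAntidiagonal (f · * g ·)]

theorem moebius_pmul_oddIndicator_mul_id {R : Type*} [Ring R] :
    (μ : ArithmeticFunction R).pmul (oddIndicator R) * ArithmeticFunction.id =
      totientTwoMul R := by
  ext n
  rw [mul_apply_eq_sum_divisors, totientTwoMul_apply,
    ← sum_odd_divisors_moebius_mul_div_eq_totient_two_mul, sum_filter]
  refine sum_congr rfl fun c _ => ?_
  by_cases hc : Odd c <;> simp [pmul_apply, hc]

theorem sum_divisors_div_mul_sum_moebius_mul_one_add {R : Type*} [CommRing R]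
    (H : ArithmeticFunction R) (n : ℕ) :
    ∑ d ∈ n.divisors, ((n / d : ℕ) : R) *
        ∑ c ∈ d.divisors, (μ c : R) * (1 + oddIndicator R c * H (d / c)) =
      n + ∑ c ∈ n.divisors, (φ (2 * c) : R) * H (n / c) := by
  set P := (μ : ArithmeticFunction R).pmul (oddIndicator R)
  have inner (d : ℕ) :
      ∑ c ∈ d.divisors, (μ c : R) * (1 + oddIndicator R c * H (d / c)) = (1 + P * H) d := by
    rw [← coe_moebius_mul_coe_zeta, add_apply, mul_apply_eq_sum_divisors,
      mul_apply_eq_sum_divisors, ← sum_add_distrib]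
    refine sum_congr rfl fun c hc => ?_
    have hdc : d / c ≠ 0 := (Nat.div_ne_zero_iff_of_dvd (Nat.dvd_of_mem_divisors hc)).mpr
      ⟨Nat.ne_zero_of_mem_divisors hc, (Nat.pos_of_mem_divisors hc).ne'⟩
    simp [P, pmul_apply, hdc, mul_add, mul_ite]
  calc _ = ((1 + P * H) * ArithmeticFunction.id) n := by
        rw [mul_apply_eq_sum_divisors]
        refine sum_congr rfl fun d _ => ?_
        rw [inner, mul_comm]
        simp
    _ = (ArithmeticFunction.id + totientTwoMul R * H) n := by
        rw [add_mul, one_mul, mul_right_comm, moebius_pmul_oddIndicator_mul_id]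
    _ = _ := by
        rw [add_apply, mul_apply_eq_sum_divisors]
        simp

theorem sum_divisors_totient_mul_one_add_two_mul_sub {R : Type*} [CommRing R]
    (H : ArithmeticFunction R) (n : ℕ) :
    ∑ c ∈ n.divisors, (φ c : R) * (1 + 2 * H (n / c) - oddIndicator R c * H (n / c)) =
      n + ∑ c ∈ n.divisors, (φ (2 * c) : R) * H (n / c) := by
  rw [← congrArg (Nat.cast : ℕ → R) n.sum_totient, Nat.cast_sum, ← sum_add_distrib]
  refine sum_congr rfl fun c _ => ?_
  rcases c.even_or_odd with hc | hc
  · simp [Nat.totient_two_mul_of_even hc, Nat.not_odd_iff_even.mpr hc]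
    ring
  · simp [Nat.totient_two_mul_of_odd hc, hc]
    ring

end ArithmeticFunction

open ArithmeticFunction in
theorem even_necklace_eq_sum_cycles_general (n : ℕ) :
    (1 / (n : ℚ)) * ∑ c ∈ n.divisors, (Nat.totient c : ℚ) *
        (3 ^ (n / c) - (if Odd c then 1 else 0) * (3 ^ (n / c) - 1) / 2) =
      ∑ d ∈ n.divisors, (1 / (d : ℚ)) *
        ∑ c ∈ d.divisors, (ArithmeticFunction.moebius c : ℚ) *
          (1 + (if Odd c then 1 else 0) * (3 ^ (d / c) - 1) / 2) := by
  let H : ArithmeticFunction ℚ := ⟨fun k => (3 ^ k - 1) / 2, by simp⟩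
  have necklaces : ∑ c ∈ n.divisors, (φ c : ℚ) *
      (3 ^ (n / c) - (if Odd c then 1 else 0) * (3 ^ (n / c) - 1) / 2) =
        ∑ c ∈ n.divisors, (φ c : ℚ) * (1 + 2 * H (n / c) - oddIndicator ℚ c * H (n / c)) :=
    sum_congr rfl fun c _ => by simp only [H, oddIndicator_apply, coe_mk]; ring
  have cycles (d : ℕ) (hd : d ∈ n.divisors) :
      1 / (d : ℚ) * ∑ c ∈ d.divisors, (μ c : ℚ) *
        (1 + (if Odd c then 1 else 0) * (3 ^ (d / c) - 1) / 2) =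
        1 / n * ((n / d : ℕ) *
          ∑ c ∈ d.divisors, (μ c : ℚ) * (1 + oddIndicator ℚ c * H (d / c))) := by
    have hn0 : (n : ℚ) ≠ 0 := Nat.cast_ne_zero.mpr (Nat.ne_zero_of_mem_divisors hd)
    have hd0 : (d : ℚ) ≠ 0 := Nat.cast_ne_zero.mpr (Nat.pos_of_mem_divisors hd).ne'
    have weights : ∑ c ∈ d.divisors, (μ c : ℚ) *
        (1 + (if Odd c then 1 else 0) * (3 ^ (d / c) - 1) / 2) =
          ∑ c ∈ d.divisors, (μ c : ℚ) * (1 + oddIndicator ℚ c * H (d / c)) :=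
      sum_congr rfl fun c _ => by rw [mul_div_assoc]; rfl
    rw [weights, Nat.cast_div (Nat.dvd_of_mem_divisors hd) hd0]
    field_simp
  rw [necklaces, sum_congr rfl cycles, ← mul_sum, sum_divisors_totient_mul_one_add_two_mul_sub,
    sum_divisors_div_mul_sum_moebius_mul_one_add]

/-- With `L_e(n) = (1/n) ∑_{cd=n} μ(c)[1 + odd(c)(3^d−1)/2]` and
`N_e(n) = (1/n) ∑_{cd=n} φ(c)[3^d − odd(c)(3^d−1)/2]`, one has
`N_e(n) = ∑_{d∣n} L_e(d)`. -/
theorem even_necklace_eq_sum_cycles (n : ℕ) (hn : 0 < n) :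
    (1 / (n : ℚ)) * ∑ c ∈ n.divisors, (Nat.totient c : ℚ) *
        (3 ^ (n / c) - (if Odd c then 1 else 0) * (3 ^ (n / c) - 1) / 2) =
      ∑ d ∈ n.divisors, (1 / (d : ℚ)) *
        ∑ c ∈ d.divisors, (ArithmeticFunction.moebius c : ℚ) *
          (1 + (if Odd c then 1 else 0) * (3 ^ (d / c) - 1) / 2) :=
  even_necklace_eq_sum_cycles_general n
end
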